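/- arXiv:1901.10453 — 2 statements merged into one kernel-verified Lean document; each statement's English description precedes it below -/
import Mathlib

section
/- Let M be a colexicographically sorted list of distinct equal-length strings over an alphabet in which the dummy symbol $ is the smallest. If a string u occurs both as a suffix of some row of M and padded with $'s on the left as a full row (a 'linker' row), then the linker row is the first (smallest-index) row in the contiguous range of rows suffixed by u. -/
/-!
If a row `w ++ u` with `|w| = j` came strictly before the linker row `$^j ++ u`, then, reading
right to left, the two rows agree on `u`, so colex order forces `w` to be colex-smaller than `$^j`.
That is impossible: `$` is the least symbol, so no word is smaller than the word of `$`s of the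
same length.
-/

/-- The alphabet {$,a,c,g,t} encoded as `Fin 5`, with `$` = 0 the smallest. -/
abbrev DnaSym := Fin 5

/-- The dummy symbol `$`. -/
def dollar : DnaSym := 0

/-- Colexicographic (right-to-left) strict order on strings. -/
def DnaColex (s t : List DnaSym) : Prop := List.Lex (· < ·) s.reverse t.reverse

theorem List.Lex.of_append_left {α : Type*} {r : α → α → Prop} [Std.Irrefl r] :
    ∀ (p : List α) {a b : List α}, List.Lex r (p ++ a) (p ++ b) → List.Lex r a b
  | [], _, _, h => h
  | x :: _, _, _, .rel h => absurd h (Std.Irrefl.irrefl x)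
  | _ :: p, _, _, .cons h => of_append_left p h

theorem List.not_lex_replicate_of_isMin {α : Type*} [Preorder α] {b : α} (hb : IsMin b) :
    ∀ l : List α, ¬ List.Lex (· < ·) l (List.replicate l.length b)
  | [], h => List.not_lex_nil h
  | _ :: _, .rel h => hb.not_lt h
  | _ :: l, .cons h => List.not_lex_replicate_of_isMin hb l h

theorem DnaColex.of_append_right {w v u : List DnaSym} (h : DnaColex (w ++ u) (v ++ u)) :
    DnaColex w v := by
  simp only [DnaColex, List.reverse_append] at h
  exact List.Lex.of_append_left u.reverse h

theorem not_dnaColex_replicate_dollar (w : List DnaSym) :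
    ¬ DnaColex w (List.replicate w.length dollar) := by
  rw [DnaColex, List.reverse_replicate, ← List.length_reverse]
  exact List.not_lex_replicate_of_isMin (isMin_iff_eq_bot.mpr rfl) _

theorem linker_is_first_in_range_general
    (M : List (List DnaSym)) (n : ℕ)
    (hsorted : M.Pairwise DnaColex)
    (hlen : ∀ x ∈ M, x.length = n)
    (u : List DnaSym) (j : ℕ)
    (i : ℕ) (hi : i < M.length)
    (hlinker : M.get ⟨i, hi⟩ = List.replicate j dollar ++ u) :
    ∀ (i' : ℕ) (hi' : i' < M.length), u <:+ M.get ⟨i', hi'⟩ → i ≤ i' := by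
  rintro i' hi' ⟨w, hw⟩
  by_contra! hlt
  have hcolex : DnaColex (M.get ⟨i', hi'⟩) (M.get ⟨i, hi⟩) := hsorted.rel_get_of_lt hlt
  have hwj : w.length = j := by
    have hw_len := hw ▸ hlen _ (List.get_mem M _)
    have hlinker_len := hlinker ▸ hlen _ (List.get_mem M _)
    simp only [List.length_append, List.length_replicate] at hw_len hlinker_len
    omega
  rw [← hw, hlinker, ← hwj] at hcolex
  exact not_dnaColex_replicate_dollar w hcolex.of_append_right

/-- core of Lemma 1: in a colexicographically sorted matrix `M`
of distinct equal-length strings (strict sortedness gives distinctness), if the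
linker row `$^j · u` (with `j ≥ 1`) occurs as row `i` of `M`, then `i` is the
smallest index of a row suffixed by `u`. -/
theorem linker_is_first_in_range
    (M : List (List DnaSym)) (n : ℕ)
    (hsorted : M.Pairwise DnaColex)
    (hlen : ∀ x ∈ M, x.length = n)
    (u : List DnaSym) (j : ℕ) (hj : 1 ≤ j)
    (i : ℕ) (hi : i < M.length)
    (hlinker : M.get ⟨i, hi⟩ = List.replicate j dollar ++ u) :
    ∀ (i' : ℕ) (hi' : i' < M.length), u <:+ M.get ⟨i', hi'⟩ → i ≤ i' :=
  linker_is_first_in_range_general M n hsorted hlen u j i hi hlinker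
end

section
/- Let v be a row (string) in a colexicographically sorted matrix M of distinct equal-length strings over {$,a,c,g,t} with $ smallest, where $ only occurs in left-padding prefixes. A proper suffix u of v of length d < |v| corresponds to a forward-overlap candidate (i.e., u occurs as a prefix of some read) if and only if the first row of range(u) is a linker row $^{|v|−d}·u contained by v. -/
/-!
Padding `u` on the left with `$`, the least symbol, gives the colexicographically least word of
length `n` with suffix `u`. Since `M` is strictly increasing, the linker row `$^(n-d) · u` is
therefore the first row of `range(u)` as soon as it is a row at all, and by `hlinkers` that
happens exactly when `u` is a prefix of a read.
-/

namespace List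

variable {α : Type*}

theorem Pairwise.le_of_get_eq_or_rel {r : α → α → Prop} [Std.Asymm r] {l : List α}
    (hl : l.Pairwise r) {i j : ℕ} (hi : i < l.length) (hj : j < l.length)
    (h : l.get ⟨j, hj⟩ = l.get ⟨i, hi⟩ ∨ r (l.get ⟨i, hi⟩) (l.get ⟨j, hj⟩)) : i ≤ j := by
  by_contra! hji
  have hrel : r (l.get ⟨j, hj⟩) (l.get ⟨i, hi⟩) := hl.rel_get_of_lt hji
  rcases h with heq | hlt
  · exact Std.Irrefl.irrefl _ (heq ▸ hrel)
  · exact Std.Asymm.asymm _ _ hrel hlt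

theorem eq_replicate_bot_or_lex_replicate_bot [LinearOrder α] [OrderBot α] (l : List α) :
    l = replicate l.length ⊥ ∨ Lex (· < ·) (replicate l.length ⊥) l := by
  induction l with
  | nil => exact Or.inl rfl
  | cons a l ih =>
    rw [length_cons, replicate_succ]
    rcases eq_or_ne a ⊥ with rfl | ha
    · exact ih.imp (congrArg _) Lex.cons
    · exact Or.inr (Lex.rel (bot_lt_iff_ne_bot.mpr ha))

theorem eq_replicate_bot_append_or_colex [LinearOrder α] [OrderBot α] {u x : List α} {m : ℕ}
    (hsuf : u <:+ x) (hlen : x.length = m + u.length) :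
    x = replicate m ⊥ ++ u ∨ Lex (· < ·) (replicate m ⊥ ++ u).reverse x.reverse := by
  obtain ⟨y, rfl⟩ := hsuf
  obtain rfl : y.length = m := by simpa using hlen
  rw [reverse_append, reverse_append, reverse_replicate]
  rcases eq_replicate_bot_or_lex_replicate_bot y.reverse with hy | hy <;> rw [length_reverse] at hy
  · exact Or.inl (by rw [← reverse_replicate, ← hy, reverse_reverse])
  · exact Or.inr (hy.append_left _ _)

end List

instance : Std.Asymm DnaColex :=
  ⟨fun s t => Std.Asymm.asymm (r := List.Lex (· < ·)) s.reverse t.reverse⟩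

theorem shorter_gives_overlap_iff_linker_first_general
    (Reads : Set (List DnaSym))
    (M : List (List DnaSym)) (n : ℕ)
    (hsorted : M.Pairwise DnaColex)
    (hlen : ∀ x ∈ M, x.length = n)
    (v : List DnaSym)
    (d : ℕ)
    (u : List DnaSym) (hu : u = v.drop (n - d))
    (hlinkers : (List.replicate (n - d) dollar ++ u) ∈ M ↔
      ∃ R ∈ Reads, u <+: R) :
    (∃ R ∈ Reads, u <+: R) ↔
      ∃ (i : ℕ) (hi : i < M.length),
        M.get ⟨i, hi⟩ = List.replicate (n - d) dollar ++ u ∧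
        u <:+ v ∧
        ∀ (i' : ℕ) (hi' : i' < M.length), u <:+ M.get ⟨i', hi'⟩ → i ≤ i' := by
  refine ⟨fun hread => ?_, fun ⟨i, hi, hrow, _⟩ => hlinkers.mp (hrow ▸ M.get_mem ⟨i, hi⟩)⟩
  obtain ⟨⟨j, hj⟩, hrow⟩ := List.mem_iff_get.mp (hlinkers.mpr hread)
  have hlinker_len : (n - d) + u.length = n := by
    have := hlen _ (hrow ▸ M.get_mem ⟨j, hj⟩)
    rwa [List.length_append, List.length_replicate] at this
  refine ⟨j, hj, hrow, hu ▸ List.drop_suffix _ _, fun i hi hsuf => ?_⟩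
  refine hsorted.le_of_get_eq_or_rel hj hi ?_
  rw [hrow]
  -- `dollar` is `⊥ : Fin 5` by definition
  exact List.eq_replicate_bot_append_or_colex (α := DnaSym) hsuf
    ((hlen _ (M.get_mem _)).trans hlinker_len.symm)

/-- Lemma 1: let `M` be the colexicographically sorted matrix of
the `n`-length node labels, where prefixes of reads of length `d < n` are
represented as linker rows `$^{n-d}·u` (hypothesis `hlinkers` states this
characterization).  Let `v` be a row of `M` and `u` its suffix of length `d`
(`d < n`).  Then `u` occurs as a prefix of some read iff the first row of
`range(u)` (the contiguous interval of rows suffixed by `u`) is the linker row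
`$^{n-d}·u` contained by `v`. -/
theorem shorter_gives_overlap_iff_linker_first
    (Reads : Set (List DnaSym))
    (M : List (List DnaSym)) (n : ℕ)
    (hsorted : M.Pairwise DnaColex)
    (hlen : ∀ x ∈ M, x.length = n)
    (v : List DnaSym) (hv : v ∈ M)
    (d : ℕ) (hd1 : 1 ≤ d) (hdn : d < n)
    (u : List DnaSym) (hu : u = v.drop (n - d))
    (hlinkers : (List.replicate (n - d) dollar ++ u) ∈ M ↔
      ∃ R ∈ Reads, u <+: R) :
    (∃ R ∈ Reads, u <+: R) ↔
      ∃ (i : ℕ) (hi : i < M.length),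
        M.get ⟨i, hi⟩ = List.replicate (n - d) dollar ++ u ∧
        u <:+ v ∧
        ∀ (i' : ℕ) (hi' : i' < M.length), u <:+ M.get ⟨i', hi'⟩ → i ≤ i' :=
  shorter_gives_overlap_iff_linker_first_general Reads M n hsorted hlen v d u hu hlinkers
end
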